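/- Inserting a k-superior edge set E_k into G and then a (k')-superior edge set E_{k'} with k' > k+1 (computed with respect to the original G): no vertex's core number increases by more than 1 over the combined insertion, because any vertex whose core number increased from k to k+1 by the insertion of E_k has its core number unchanged by the subsequent insertion of E_{k'}. -/

import Mathlib

open SimpleGraph

/-- The core number of a vertex: the largest `k` such that the vertex lies in a
subgraph of `G` with minimum degree at least `k`. -/
noncomputable def coreNumber {V : Type*} (G : SimpleGraph V) (v : V) : ℕ :=
  sSup {k : ℕ | ∃ H : G.Subgraph, v ∈ H.verts ∧ ∀ w ∈ H.verts, k ≤ (H.neighborSet w).ncard}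

/-- `S` is a `k`-superior edge set of new edges with respect to `G`. -/
def IsKSuperiorInsertSet {V : Type*} (G : SimpleGraph V) (k : ℕ) (S : Set (Sym2 V)) : Prop :=
  (∀ e ∈ S, e ∉ G.edgeSet ∧ ∃ u v : V, u ≠ v ∧ e = s(u,v) ∧
      coreNumber G u = k ∧ coreNumber G u ≤ coreNumber G v) ∧
  ∀ e₁ ∈ S, ∀ e₂ ∈ S, e₁ ≠ e₂ → ∀ u : V, u ∈ e₁ → u ∈ e₂ → k < coreNumber G u

/-!
A new edge of `G ⊔ fromEdgeSet Ek ⊔ fromEdgeSet Ek'` leads from `x` to a vertex of no smaller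
`G`-core number only if it is a superior edge at `x`, i.e. `coreNumber G x` is `k` or `k'`; since
`k ≠ k'` and a vertex of core number `k` lies on at most one edge of a `k`-superior set, every
vertex has at most one such "upward" new edge.

Let `H` be a subgraph of the enlarged graph of minimum degree `m`. By induction on `t < m`, every
vertex of `H` has `G`-core number at least `t`: a vertex `x` of `H` with `coreNumber G x = t` has
at most one upward new edge inside `H`, hence at least `m - 1 ≥ t + 1` neighbours in `H` via edges
of `G`, so `H.verts` together with the `(t + 1)`-core of `G` spans a subgraph of `G` of minimum
degree `t + 1`. Thus core numbers grow by at most one, and a vertex already raised by `Ek` cannot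
be raised again by `Ek'`.
-/

namespace IsKSuperiorInsertSet

variable {V : Type*} {G : SimpleGraph V} {k : ℕ} {S : Set (Sym2 V)}

lemma coreNumber_eq_of_mem (h : IsKSuperiorInsertSet G k S) {x y : V} (hxy : s(x, y) ∈ S)
    (hle : coreNumber G x ≤ coreNumber G y) : coreNumber G x = k := by
  obtain ⟨-, u, w, -, he, hu, huw⟩ := h.1 _ hxy
  rcases Sym2.eq_iff.mp he with ⟨rfl, rfl⟩ | ⟨rfl, rfl⟩ <;> omega

lemma eq_of_mem_of_mem (h : IsKSuperiorInsertSet G k S) {x y z : V} (hx : coreNumber G x = k)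
    (hy : s(x, y) ∈ S) (hz : s(x, z) ∈ S) : y = z := by
  by_contra hne
  have := h.2 _ hy _ hz (fun he ↦ hne (Sym2.congr_right.mp he)) x
    (Sym2.mem_mk_left x y) (Sym2.mem_mk_left x z)
  omega

end IsKSuperiorInsertSet

namespace CoreNumber

variable {V : Type*} [Fintype V] {G : SimpleGraph V}

lemma bddAbove_setOf (G : SimpleGraph V) (v : V) :
    BddAbove {k : ℕ | ∃ H : G.Subgraph, v ∈ H.verts ∧
      ∀ w ∈ H.verts, k ≤ (H.neighborSet w).ncard} := by
  refine ⟨Fintype.card V, ?_⟩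
  rintro n ⟨H, hv, hd⟩
  calc n ≤ (H.neighborSet v).ncard := hd v hv
    _ ≤ (Set.univ : Set V).ncard := Set.ncard_le_ncard (Set.subset_univ _)
    _ = Fintype.card V := by rw [Set.ncard_univ, Nat.card_eq_fintype_card]

lemma le_coreNumber {v : V} {n : ℕ} (H : G.Subgraph) (hv : v ∈ H.verts)
    (hH : ∀ w ∈ H.verts, n ≤ (H.neighborSet w).ncard) : n ≤ coreNumber G v :=
  le_csSup (bddAbove_setOf G v) ⟨H, hv, hH⟩

lemma exists_subgraph_coreNumber_le (G : SimpleGraph V) (v : V) :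
    ∃ H : G.Subgraph, v ∈ H.verts ∧ ∀ w ∈ H.verts, coreNumber G v ≤ (H.neighborSet w).ncard :=
  (Nat.sSup_mem · (bddAbove_setOf G v))
    ⟨0, G.singletonSubgraph v, Set.mem_singleton v, fun _ _ ↦ Nat.zero_le _⟩

lemma coreNumber_mono {G' : SimpleGraph V} (h : G ≤ G') (v : V) :
    coreNumber G v ≤ coreNumber G' v := by
  obtain ⟨H, hv, hH⟩ := exists_subgraph_coreNumber_le G v
  exact le_coreNumber ⟨H.verts, H.Adj, fun ha ↦ h (H.adj_sub ha), H.edge_vert, H.symm⟩ hv hH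

lemma le_coreNumber_of_le_ncard {U : Set V} {t : ℕ}
    (hU : ∀ x ∈ U, t ≤ {y ∈ U | G.Adj x y}.ncard) {v : V} (hv : v ∈ U) :
    t ≤ coreNumber G v :=
  le_coreNumber ((⊤ : G.Subgraph).induce U) hv fun x (hx : x ∈ U) ↦
    (hU x hx).trans_eq (congrArg Set.ncard (by ext; simp [hx]))

lemma le_ncard_adj_of_le_coreNumber {x : V} {t : ℕ} (ht : t ≤ coreNumber G x) :
    t ≤ {y | t ≤ coreNumber G y ∧ G.Adj x y}.ncard := by
  obtain ⟨H, hx, hH⟩ := exists_subgraph_coreNumber_le G x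
  calc t ≤ coreNumber G x := ht
    _ ≤ (H.neighborSet x).ncard := hH x hx
    _ ≤ _ := Set.ncard_le_ncard fun y hy ↦
      And.intro (ht.trans (le_coreNumber H (H.edge_vert (H.adj_symm hy)) hH)) (H.adj_sub hy)

lemma le_coreNumber_of_forall_coreNumber_lt {S : Set V} {t : ℕ}
    (hS : ∀ x ∈ S, coreNumber G x < t → t ≤ {y ∈ S | G.Adj x y}.ncard) {v : V} (hv : v ∈ S) :
    t ≤ coreNumber G v := by
  refine le_coreNumber_of_le_ncard (U := S ∪ {y | t ≤ coreNumber G y}) (fun x hx ↦ ?_) (.inl hv)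
  by_cases hxt : t ≤ coreNumber G x
  · exact (le_ncard_adj_of_le_coreNumber hxt).trans
      (Set.ncard_le_ncard fun y hy ↦ ⟨.inr hy.1, hy.2⟩)
  · exact (hS x (hx.resolve_right hxt) (not_le.mp hxt)).trans
      (Set.ncard_le_ncard fun y hy ↦ ⟨.inl hy.1, hy.2⟩)

lemma coreNumber_le_add_one {G' : SimpleGraph V}
    (h : ∀ x, {y | G'.Adj x y ∧ ¬G.Adj x y ∧ coreNumber G x ≤ coreNumber G y}.Subsingleton)
    (v : V) : coreNumber G' v ≤ coreNumber G v + 1 := by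
  obtain ⟨H, hv, hH⟩ := exists_subgraph_coreNumber_le G' v
  suffices ∀ t < coreNumber G' v, ∀ x ∈ H.verts, t ≤ coreNumber G x by
    by_contra! hlt
    exact absurd (this (coreNumber G v + 1) (by omega) v hv) (by omega)
  intro t
  induction t with
  | zero => simp
  | succ t ih =>
    intro ht
    refine fun w hw ↦ le_coreNumber_of_forall_coreNumber_lt (fun x hx hlt ↦ ?_) hw
    have hxt : coreNumber G x = t := le_antisymm (by omega) (ih (by omega) x hx)
    have hsub : H.neighborSet x ⊆ {y ∈ H.verts | G.Adj x y} ∪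
        {y | G'.Adj x y ∧ ¬G.Adj x y ∧ coreNumber G x ≤ coreNumber G y} := by
      intro y hy
      have hyH := H.edge_vert (H.adj_symm hy)
      by_cases hG : G.Adj x y
      · exact .inl ⟨hyH, hG⟩
      · exact .inr ⟨H.adj_sub hy, hG, hxt ▸ ih (by omega) y hyH⟩
    have := calc coreNumber G' v ≤ (H.neighborSet x).ncard := hH x hx
      _ ≤ _ := Set.ncard_le_ncard hsub
      _ ≤ _ := Set.ncard_union_le _ _
      _ ≤ {y ∈ H.verts | G.Adj x y}.ncard + 1 := by
        gcongr
        exact Set.ncard_le_one_iff_subsingleton.mpr (h x)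
    omega

end CoreNumber

open CoreNumber

lemma subsingleton_upward_newNeighbors {V : Type*} {G : SimpleGraph V} {k k' : ℕ}
    {S S' : Set (Sym2 V)} (hkk : k ≠ k') (hS : IsKSuperiorInsertSet G k S)
    (hS' : IsKSuperiorInsertSet G k' S') (x : V) :
    {y | (G ⊔ fromEdgeSet S ⊔ fromEdgeSet S').Adj x y ∧ ¬G.Adj x y ∧
      coreNumber G x ≤ coreNumber G y}.Subsingleton := by
  have hnew : ∀ y ∈ {y | (G ⊔ fromEdgeSet S ⊔ fromEdgeSet S').Adj x y ∧ ¬G.Adj x y ∧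
      coreNumber G x ≤ coreNumber G y},
      (s(x, y) ∈ S ∧ coreNumber G x = k) ∨ (s(x, y) ∈ S' ∧ coreNumber G x = k') := by
    rintro y ⟨hadj, hG, hle⟩
    simp only [sup_adj, fromEdgeSet_adj] at hadj
    rcases hadj with (hG' | ⟨hy, -⟩) | ⟨hy, -⟩
    · exact absurd hG' hG
    · exact .inl ⟨hy, hS.coreNumber_eq_of_mem hy hle⟩
    · exact .inr ⟨hy, hS'.coreNumber_eq_of_mem hy hle⟩
  intro y hy z hz
  rcases hnew y hy with ⟨hy, hx⟩ | ⟨hy, hx⟩ <;> rcases hnew z hz with ⟨hz, hx'⟩ | ⟨hz, hx'⟩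
  · exact hS.eq_of_mem_of_mem hx hy hz
  · exact absurd (hx.symm.trans hx') hkk
  · exact absurd (hx'.symm.trans hx) hkk
  · exact hS'.eq_of_mem_of_mem hx hy hz

theorem two_step_superior_insert {V : Type*} [Fintype V] (G : SimpleGraph V)
    (k k' : ℕ) (hk : k + 1 < k')
    (Ek Ek' : Set (Sym2 V))
    (hEk : IsKSuperiorInsertSet G k Ek) (hEk' : IsKSuperiorInsertSet G k' Ek') :
    (∀ v : V, coreNumber G v = k →
        coreNumber (G ⊔ fromEdgeSet Ek) v = coreNumber G v + 1 →
        coreNumber ((G ⊔ fromEdgeSet Ek) ⊔ fromEdgeSet Ek') v =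
          coreNumber (G ⊔ fromEdgeSet Ek) v) ∧
    (∀ v : V, coreNumber ((G ⊔ fromEdgeSet Ek) ⊔ fromEdgeSet Ek') v ≤
        coreNumber G v + 1) := by
  have hle : ∀ v, coreNumber ((G ⊔ fromEdgeSet Ek) ⊔ fromEdgeSet Ek') v ≤ coreNumber G v + 1 :=
    coreNumber_le_add_one (subsingleton_upward_newNeighbors (by omega) hEk hEk')
  refine ⟨fun v _ hv ↦ le_antisymm ?_ (coreNumber_mono le_sup_left v), hle⟩
  have := hle v
  omega
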